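/- For k ∈ (0,1), (4/3)·(K(k) + E(k) - D(k)) = π - π·∑_{i=1}^{∞} (1/((2i-1)(i+1)))·((2i-1)!!/(2i)!!)²·k^{2i}, where D(k) = (K(k)-E(k))/k². -/

import Mathlib

open Real

noncomputable def ellipticK (k : ℝ) : ℝ := ∫ θ in (0:ℝ)..(π / 2), 1 / Real.sqrt (1 - k ^ 2 * sin θ ^ 2)

noncomputable def ellipticE (k : ℝ) : ℝ := ∫ θ in (0:ℝ)..(π / 2), Real.sqrt (1 - k ^ 2 * sin θ ^ 2)

/-!
Expand `(1 - c sin² θ) ^ a` by the binomial series and integrate termwise with Wallis' integrals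
`∫₀^{π/2} sin^{2n} = (π/2) wₙ`, `wₙ = (2n-1)‼/(2n)‼`. For `a = -1/2` and `a = 1/2` the signed
binomial coefficients are `wₙ` and `wₙ/(1-2n)`, so `K = (π/2) ∑ wₙ² k^{2n}` and
`E = (π/2) ∑ wₙ² k^{2n}/(1-2n)`. In `4/3 (K + E - (K - E)/k²)` the coefficient of `k^{2n}` then
collapses to `π wₙ² / ((1-2n)(n+1))`, whose constant term is `π`.
-/

open Finset
open scoped Nat

noncomputable def wallisCoeff (n : ℕ) : ℝ := ∏ i ∈ range n, (2 * (i : ℝ) + 1) / (2 * i + 2)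

@[simp]
lemma wallisCoeff_zero : wallisCoeff 0 = 1 :=
  prod_range_zero _

lemma wallisCoeff_succ (n : ℕ) :
    wallisCoeff (n + 1) = wallisCoeff n * ((2 * n + 1) / (2 * n + 2)) :=
  prod_range_succ _ n

lemma integral_sin_pow_zero_pi_div_two (n : ℕ) :
    ∫ x in (0 : ℝ)..π / 2, sin x ^ n = (∫ x in (0 : ℝ)..π, sin x ^ n) / 2 := by
  have hint (a b : ℝ) : IntervalIntegrable (fun x => sin x ^ n) MeasureTheory.volume a b :=
    (continuous_sin.pow n).intervalIntegrable a b
  have hsymm : ∫ x in π / 2..π, sin x ^ n = ∫ x in (0 : ℝ)..π / 2, sin x ^ n := by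
    simpa [sin_pi_sub, sub_half] using
      (intervalIntegral.integral_comp_sub_left (fun x => sin x ^ n) π (a := 0) (b := π / 2)).symm
  rw [← intervalIntegral.integral_add_adjacent_intervals (hint 0 (π / 2)) (hint (π / 2) π), hsymm]
  ring

lemma integral_sin_pow_even_zero_pi_div_two (n : ℕ) :
    ∫ x in (0 : ℝ)..π / 2, sin x ^ (2 * n) = π / 2 * wallisCoeff n := by
  rw [integral_sin_pow_zero_pi_div_two, integral_sin_pow_even, wallisCoeff]
  ring

lemma doubleFactorial_div_eq_wallisCoeff (n : ℕ) :
    ((2 * n + 1)‼ : ℝ) / (2 * n + 2)‼ = wallisCoeff (n + 1) := by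
  induction n with
  | zero => simp [wallisCoeff]
  | succ n ih =>
    rw [wallisCoeff_succ, ← ih, show 2 * (n + 1) + 1 = (2 * n + 1) + 2 by ring,
      show 2 * (n + 1) + 2 = (2 * n + 2) + 2 by ring, Nat.doubleFactorial_add_two,
      Nat.doubleFactorial_add_two]
    have : ((2 * n + 2)‼ : ℝ) ≠ 0 := by positivity
    push_cast
    field_simp
    ring

lemma Ring.choose_succ_mul {R : Type*} [Field R] [CharZero R] (a : R) (n : ℕ) :
    Ring.choose a (n + 1) * (n + 1) = Ring.choose a n * (a - n) := by
  simp only [Ring.choose_eq_smul, smul_eq_mul, descPochhammer_succ_right, Polynomial.smeval_mul,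
    Polynomial.smeval_sub, Polynomial.smeval_X, Polynomial.smeval_natCast, Nat.factorial_succ]
  push_cast
  field_simp
  simp

lemma choose_neg_half_mul_neg_one_pow (n : ℕ) :
    Ring.choose (-1 / 2 : ℝ) n * (-1) ^ n = wallisCoeff n := by
  induction n with
  | zero => simp [wallisCoeff]
  | succ n ih =>
    have : (n : ℝ) + 1 ≠ 0 := by positivity
    rw [eq_div_of_mul_eq this (Ring.choose_succ_mul (-1 / 2 : ℝ) n), wallisCoeff_succ, ← ih,
      pow_succ]
    field_simp
    ring

lemma choose_half_mul_one_sub_two_mul (n : ℕ) :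
    Ring.choose (1 / 2 : ℝ) n * (1 - 2 * n) = Ring.choose (-1 / 2) n := by
  induction n with
  | zero => simp
  | succ n ih =>
    have h₁ := Ring.choose_succ_mul (1 / 2 : ℝ) n
    have h₂ := Ring.choose_succ_mul (-1 / 2 : ℝ) n
    have : (n : ℝ) + 1 ≠ 0 := by positivity
    apply mul_right_cancel₀ this
    push_cast
    linear_combination (1 - 2 * (n + 1 : ℝ)) * h₁ - h₂ + (-1 / 2 - n) * ih

lemma one_sub_two_mul_natCast_ne_zero (n : ℕ) : (1 : ℝ) - 2 * n ≠ 0 := by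
  intro h
  have : (1 : ℤ) = 2 * n := by exact_mod_cast sub_eq_zero.mp h
  omega

lemma choose_half_mul_neg_one_pow (n : ℕ) :
    Ring.choose (1 / 2 : ℝ) n * (-1) ^ n = wallisCoeff n / (1 - 2 * n) := by
  have := one_sub_two_mul_natCast_ne_zero n
  rw [← choose_neg_half_mul_neg_one_pow, ← choose_half_mul_one_sub_two_mul]
  field_simp

lemma hasSum_choose_mul_pow (a : ℝ) {y : ℝ} (hy : |y| < 1) :
    HasSum (fun n => Ring.choose a n * y ^ n) ((1 + y) ^ a) := by
  have h := (one_add_rpow_hasFPowerSeriesOnBall_zero (a := a)).hasSum (y := y)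
    (by simpa [Metric.mem_eball, edist_zero_right, enorm_eq_nnnorm, ← NNReal.coe_lt_one] using hy)
  simpa [binomialSeries, FormalMultilinearSeries.coeff_ofScalars, mul_comm] using h

lemma summable_abs_choose_mul_pow (a : ℝ) {r : ℝ} (hr₀ : 0 ≤ r) (hr : r < 1) :
    Summable (fun n => |Ring.choose a n| * r ^ n) := by
  lift r to NNReal using hr₀
  have := (binomialSeries ℝ a).summable_norm_mul_pow (r := r)
    (lt_of_lt_of_le (by exact_mod_cast hr) binomialSeries_radius_ge_one)
  simpa [binomialSeries, FormalMultilinearSeries.ofScalars_norm] using this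

lemma hasSum_integral_one_sub_mul_sin_sq_rpow (a : ℝ) {c : ℝ} (hc : |c| < 1) :
    HasSum (fun n => π / 2 * (Ring.choose a n * (-c) ^ n * wallisCoeff n))
      (∫ θ in (0 : ℝ)..π / 2, (1 - c * sin θ ^ 2) ^ a) := by
  have hterm (n : ℕ) : ∫ θ in (0 : ℝ)..π / 2, Ring.choose a n * (-(c * sin θ ^ 2)) ^ n =
      π / 2 * (Ring.choose a n * (-c) ^ n * wallisCoeff n) := by
    simp_rw [← neg_mul, mul_pow, ← pow_mul, ← mul_assoc, intervalIntegral.integral_const_mul,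
      integral_sin_pow_even_zero_pi_div_two]
    ring
  have hsin (θ : ℝ) : |-(c * sin θ ^ 2)| ≤ |c| := by
    rw [abs_neg, abs_mul, abs_of_nonneg (sq_nonneg (sin θ))]
    exact mul_le_of_le_one_right (abs_nonneg c) (sin_sq_le_one θ)
  simp_rw [← hterm, sub_eq_add_neg]
  refine intervalIntegral.hasSum_integral_of_dominated_convergence
    (fun n _ => |Ring.choose a n| * |c| ^ n) (fun n => by fun_prop) (fun n => ?_)
    (by simp [summable_abs_choose_mul_pow a (abs_nonneg c) hc]) intervalIntegrable_const
    (by filter_upwards with θ _ using hasSum_choose_mul_pow a ((hsin θ).trans_lt hc))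
  filter_upwards with θ _
  rw [norm_mul, norm_pow, Real.norm_eq_abs, Real.norm_eq_abs]
  exact mul_le_mul_of_nonneg_left (pow_le_pow_left₀ (abs_nonneg _) (hsin θ) n) (abs_nonneg _)

lemma hasSum_ellipticK {k : ℝ} (hk : |k| < 1) :
    HasSum (fun n => π / 2 * wallisCoeff n ^ 2 * (k ^ 2) ^ n) (ellipticK k) := by
  have hc : |k ^ 2| < 1 := by rw [abs_pow]; exact pow_lt_one₀ (abs_nonneg k) hk two_ne_zero
  have hK : ellipticK k = ∫ θ in (0 : ℝ)..π / 2, (1 - k ^ 2 * sin θ ^ 2) ^ (-1 / 2 : ℝ) := by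
    refine intervalIntegral.integral_congr fun θ _ => ?_
    have : 0 ≤ 1 - k ^ 2 * sin θ ^ 2 := by
      nlinarith [sin_sq_le_one θ, sq_nonneg (sin θ), sq_abs k, abs_nonneg k]
    simp only [neg_div, rpow_neg this, sqrt_eq_rpow, one_div]
  rw [hK]
  convert hasSum_integral_one_sub_mul_sin_sq_rpow (-1 / 2) hc using 2 with n
  rw [neg_pow]
  linear_combination -(π / 2 * (k ^ 2) ^ n * wallisCoeff n) * choose_neg_half_mul_neg_one_pow n

lemma hasSum_ellipticE {k : ℝ} (hk : |k| < 1) :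
    HasSum (fun n => π / 2 * (wallisCoeff n ^ 2 / (1 - 2 * n)) * (k ^ 2) ^ n) (ellipticE k) := by
  have hc : |k ^ 2| < 1 := by rw [abs_pow]; exact pow_lt_one₀ (abs_nonneg k) hk two_ne_zero
  have hE : ellipticE k = ∫ θ in (0 : ℝ)..π / 2, (1 - k ^ 2 * sin θ ^ 2) ^ (1 / 2 : ℝ) := by
    simp only [ellipticE, sqrt_eq_rpow]
  rw [hE]
  convert hasSum_integral_one_sub_mul_sin_sq_rpow (1 / 2) hc using 2 with n
  rw [neg_pow]
  linear_combination -(π / 2 * (k ^ 2) ^ n * wallisCoeff n) * choose_half_mul_neg_one_pow n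

lemma hasSum_ellipticK_sub_ellipticE_div_sq {k : ℝ} (hk₀ : k ≠ 0) (hk : |k| < 1) :
    HasSum (fun n => π / 2 * (wallisCoeff n ^ 2 * ((2 * n + 1) / (2 * n + 2))) * (k ^ 2) ^ n)
      ((ellipticK k - ellipticE k) / k ^ 2) := by
  have h := ((hasSum_ellipticK hk).sub (hasSum_ellipticE hk)).div_const (k ^ 2)
  rw [← hasSum_nat_add_iff' 1] at h
  simp only [sum_range_one, wallisCoeff_zero, Nat.cast_zero, mul_zero, sub_zero, div_one,
    sub_self, zero_div] at h
  refine h.congr_fun fun n => ?_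
  have := one_sub_two_mul_natCast_ne_zero (n + 1)
  rw [wallisCoeff_succ]
  field_simp
  push_cast
  ring

lemma hasSum_ellipticK_add_ellipticE_sub_div_sq {k : ℝ} (hk₀ : k ≠ 0) (hk : |k| < 1) :
    HasSum (fun n => π * wallisCoeff n ^ 2 / ((1 - 2 * n) * (n + 1)) * (k ^ 2) ^ n)
      (4 / 3 * (ellipticK k + ellipticE k - (ellipticK k - ellipticE k) / k ^ 2)) := by
  refine ((((hasSum_ellipticK hk).add (hasSum_ellipticE hk)).sub
    (hasSum_ellipticK_sub_ellipticE_div_sq hk₀ hk)).mul_left (4 / 3)).congr_fun fun n => ?_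
  have := one_sub_two_mul_natCast_ne_zero n
  field_simp
  ring

theorem area_series (k : ℝ) (hk0 : 0 < k) (hk1 : k < 1) :
    HasSum (fun i : ℕ =>
        π * (1 / ((2 * (i : ℝ) + 1) * ((i : ℝ) + 2))
          * ((Nat.doubleFactorial (2 * i + 1) : ℝ) / (Nat.doubleFactorial (2 * i + 2))) ^ 2)
          * k ^ (2 * (i + 1)))
      (π - 4 / 3 * (ellipticK k + ellipticE k - (ellipticK k - ellipticE k) / k ^ 2)) := by
  have h := (hasSum_ellipticK_add_ellipticE_sub_div_sq hk0.ne' (abs_lt.2 ⟨by linarith, hk1⟩)).neg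
  rw [← hasSum_nat_add_iff' 1] at h
  simp only [sum_range_one, wallisCoeff_zero, Nat.cast_zero, mul_zero, sub_zero, zero_add,
    one_pow, mul_one, pow_zero, div_one, sub_neg_eq_add, neg_add_eq_sub] at h
  refine h.congr_fun fun i => ?_
  have := one_sub_two_mul_natCast_ne_zero (i + 1)
  rw [doubleFactorial_div_eq_wallisCoeff, pow_mul]
  push_cast at this ⊢
  field_simp
  ring
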